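/- Let $\delta_{\rm z} \in \mathbb{R}$ with $0 < \delta_{\rm z} < 1$, let $\zeta^*_p, \zeta^*_q \in \mathbb{R}$, let $\varepsilon > 0$, and let $\zeta_0 \in \mathbb{R}$ satisfy $|\zeta_0 - \zeta^*_p| < \varepsilon$. Let $N \in \mathbb{N}$ satisfy $N > \frac{1}{2} \cdot \frac{\log\big(|\zeta^*_p - \zeta^*_q|/\varepsilon + 1\big)}{\log(1/\delta_{\rm z})}$. Define the sequence $\zeta[0] = \zeta_0$ and $\zeta[n+1] = \delta_{\rm z}^2\, \zeta[n] + (1 - \delta_{\rm z}^2)\, \zeta^*_q$ for all $n$. Then $|\zeta[N] - \zeta^*_q| < \varepsilon$. -/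

import Mathlib

/-!
Each step of the affine map contracts the distance to its fixed point `ζq` by `δz²`, so after
`N` steps that distance is `δz^(2N) |ζ0 - ζq|`. By the triangle inequality
`|ζ0 - ζq| < ε + |ζp - ζq| = ε (|ζp - ζq|/ε + 1)`, and the bound on `N` is exactly the condition
`δz^(2N) (|ζp - ζq|/ε + 1) < 1`, read through a logarithm.
-/

theorem sub_fixedPoint_eq_pow_mul_of_affine_rec {R : Type*} [CommRing R] {a c : R} {x : ℕ → R}
    (hx : ∀ n, x (n + 1) = a * x n + (1 - a) * c) (n : ℕ) :
    x n - c = a ^ n * (x 0 - c) := by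
  induction n with
  | zero => simp
  | succ n ih =>
    rw [hx n]
    linear_combination a * ih

theorem pow_mul_lt_one_of_log_div_log_inv_lt {r x : ℝ} {N : ℕ} (hr0 : 0 < r) (hr1 : r < 1)
    (hx : 0 < x) (hN : Real.log x / Real.log r⁻¹ < N) :
    r ^ N * x < 1 := by
  have hlog : 0 < Real.log r⁻¹ := Real.log_pos ((one_lt_inv₀ hr0).mpr hr1)
  have hlt : Real.log x < Real.log (r⁻¹ ^ N) := by
    rw [Real.log_pow]
    exact (div_lt_iff₀ hlog).mp hN
  have hx_lt : x < r⁻¹ ^ N := (Real.log_lt_log_iff hx (by positivity)).mp hlt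
  calc r ^ N * x < r ^ N * r⁻¹ ^ N := by gcongr
    _ = 1 := by rw [← mul_pow, mul_inv_cancel₀ hr0.ne', one_pow]

/-- Dwell-time proposition: if `|ζ0 - ζ⋆_p| < ε` and the dwell time `N` exceeds
`(1/2) · log(|ζ⋆_p - ζ⋆_q|/ε + 1) / log(1/δz)`, then iterating the affine map
`ζ[n+1] = δz² ζ[n] + (1 - δz²) ζ⋆_q` for `N` steps brings the state within `ε`
of the destination fixed point `ζ⋆_q`. -/
theorem dwell_time_bound
    (δz ζp ζq ε ζ0 : ℝ)
    (hδ0 : 0 < δz) (hδ1 : δz < 1) (hε : 0 < ε)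
    (h0 : |ζ0 - ζp| < ε)
    (N : ℕ)
    (hN : (N : ℝ) > (1 / 2) * Real.log (|ζp - ζq| / ε + 1) / Real.log (1 / δz))
    (ζ : ℕ → ℝ) (hζ0 : ζ 0 = ζ0)
    (hrec : ∀ n : ℕ, ζ (n + 1) = δz ^ 2 * ζ n + (1 - δz ^ 2) * ζq) :
    |ζ N - ζq| < ε := by
  set K := |ζp - ζq| / ε + 1
  have hK : 0 < K := by positivity
  have hlog : (1 / 2) * Real.log K / Real.log (1 / δz) = Real.log K / Real.log (δz ^ 2)⁻¹ := by
    have hδlog : Real.log δz ≠ 0 := (Real.log_neg hδ0 hδ1).ne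
    rw [one_div δz, Real.log_inv, Real.log_inv, Real.log_pow]
    field_simp
    ring
  have hcontract : (δz ^ 2) ^ N * K < 1 :=
    pow_mul_lt_one_of_log_div_log_inv_lt (by positivity) (by nlinarith) hK (hlog ▸ hN)
  have hstart : |ζ0 - ζq| < ε * K := by
    calc |ζ0 - ζq| ≤ |ζ0 - ζp| + |ζp - ζq| := abs_sub_le _ _ _
      _ < ε + |ζp - ζq| := by linarith
      _ = ε * K := by rw [mul_add, mul_div_cancel₀ _ hε.ne', mul_one, add_comm]
  rw [sub_fixedPoint_eq_pow_mul_of_affine_rec hrec, hζ0, abs_mul,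
    abs_of_pos (by positivity : (0 : ℝ) < (δz ^ 2) ^ N)]
  calc (δz ^ 2) ^ N * |ζ0 - ζq| ≤ (δz ^ 2) ^ N * (ε * K) := by gcongr
    _ = ε * ((δz ^ 2) ^ N * K) := by ring
    _ < ε := mul_lt_of_lt_one_right hε hcontract
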